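/- Let 1 < c < 37/18 with c ≠ 2. Then ∫_{−τ}^{τ} |S(x)|² dx ≪ X^{2−c} (log X)³ and ∫_{−τ}^{τ} |I(x)|² dx ≪ X^{2−c} log X, where the implied constants depend only on c and η. -/

import Mathlib

open MeasureTheory

noncomputable def e (t : ℝ) : ℂ := Complex.exp (2 * Real.pi * Complex.I * t)

/-- The exponential sum `S(x) = Σ_{X/2 < p ≤ X} (log p) e(p^c x)` over primes. -/
noncomputable def S (X c : ℝ) (x : ℝ) : ℂ :=
  ∑ p ∈ (Finset.range (⌈X⌉₊ + 1)).filter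
      (fun p : ℕ => p.Prime ∧ X / 2 < (p : ℝ) ∧ (p : ℝ) ≤ X),
    (Real.log p : ℂ) * e ((p : ℝ) ^ c * x)

/-- The integral `I(x) = ∫_{X/2}^X e(t^c x) dt`. -/
noncomputable def I (X c : ℝ) (x : ℝ) : ℂ := ∫ t in (X / 2)..X, e (t ^ c * x)


section Helpers
open Complex
lemma norm_e (t : ℝ) : ‖e t‖ = 1 := by
  simp [e, Complex.norm_exp]

lemma conj_e (t : ℝ) : (starRingEnd ℂ) (e t) = e (-t) := by
  rw [e, e, ← Complex.exp_conj]
  congr 1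
  simp only [map_mul, Complex.conj_I, Complex.conj_ofReal, map_ofNat]
  push_cast
  ring

lemma e_mul (a b : ℝ) : e a * e b = e (a + b) := by
  rw [e, e, e, ← Complex.exp_add]
  congr 1
  push_cast
  ring

lemma cont_e (θ : ℝ) : Continuous (fun x : ℝ => e (θ * x)) := by
  unfold e
  fun_prop

lemma intInt_e (θ τ : ℝ) : IntervalIntegrable (fun x : ℝ => e (θ * x)) volume (-τ) τ :=
  (cont_e θ).intervalIntegrable _ _

lemma norm_integral_e_le_triv (θ τ : ℝ) (hτ : 0 ≤ τ) :
    ‖∫ x in (-τ)..τ, e (θ * x)‖ ≤ 2 * τ := by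
  have := intervalIntegral.norm_integral_le_of_norm_le_const
    (C := 1) (f := fun x : ℝ => e (θ * x)) (a := -τ) (b := τ)
    (fun x _ => by rw [norm_e])
  calc ‖∫ x in (-τ)..τ, e (θ * x)‖ ≤ 1 * |τ - (-τ)| := this
    _ = 2 * τ := by rw [_root_.abs_of_nonneg (by linarith : (0:ℝ) ≤ τ - (-τ))]; ring

lemma norm_integral_e_le (θ τ : ℝ) (hθ : θ ≠ 0) :
    ‖∫ x in (-τ)..τ, e (θ * x)‖ ≤ 1 / (Real.pi * |θ|) := by
  have hc : (2 * (Real.pi:ℂ) * Complex.I * (θ:ℂ)) ≠ 0 := by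
    simp [Real.pi_ne_zero, Complex.I_ne_zero, hθ]
  have heq : (fun x : ℝ => e (θ * x)) = fun x : ℝ =>
      Complex.exp ((2 * (Real.pi:ℂ) * Complex.I * (θ:ℂ)) * (x:ℂ)) := by
    funext x
    rw [e]
    push_cast
    ring_nf
  rw [heq, integral_exp_mul_complex hc]
  rw [norm_div]
  have h1 : ∀ s : ℝ, ‖Complex.exp ((2 * (Real.pi:ℂ) * Complex.I * (θ:ℂ)) * (s:ℂ))‖ = 1 := by
    intro s
    rw [Complex.norm_exp]
    have : ((2 * (Real.pi:ℂ) * Complex.I * (θ:ℂ)) * (s:ℂ)).re = 0 := by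
      simp [Complex.mul_re, Complex.mul_im]
    rw [this, Real.exp_zero]
  have h2 : ‖(2 * (Real.pi:ℂ) * Complex.I * (θ:ℂ))‖ = 2 * Real.pi * |θ| := by
    simp only [norm_mul, Complex.norm_I, Complex.norm_real, Complex.norm_ofNat,
      Real.norm_eq_abs, mul_one]
    rw [_root_.abs_of_nonneg Real.pi_pos.le]
  rw [h2]
  have h1a := h1 τ
  have h1b := h1 (-τ)
  push_cast at h1b ⊢
  have hpos : 0 < 2 * Real.pi * |θ| := by positivity
  apply le_trans ((div_le_div_iff_of_pos_right hpos).mpr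
    ((norm_sub_le _ _).trans (by rw [h1a, h1b])))
  apply le_of_eq
  rw [div_eq_div_iff hpos.ne' (by positivity)]
  ring

lemma rpow_gap {c m a b : ℝ} (hc : 1 < c) (hm : 0 < m) (hma : m ≤ a) (hab : a < b) :
    c * m ^ (c-1) * (b - a) ≤ b ^ c - a ^ c := by
  obtain ⟨ξ, hξ, hslope⟩ := exists_hasDerivAt_eq_slope (fun x : ℝ => x ^ c)
    (fun x : ℝ => c * x ^ (c-1)) hab
    (by
      intro x hx
      exact (Real.continuousAt_rpow_const x c
        (Or.inl (by have := hm.trans_le (hma.trans hx.1); exact this.ne'))).continuousWithinAt)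
    (by
      intro x hx
      exact Real.hasDerivAt_rpow_const
        (Or.inl (by have := hm.trans_le (hma.trans hx.1.le); exact this.ne')))
  have hξm : m ≤ ξ := hma.trans hξ.1.le
  have h1 : c * m ^ (c-1) ≤ c * ξ ^ (c-1) :=
    mul_le_mul_of_nonneg_left (Real.rpow_le_rpow hm.le hξm (by linarith)) (by linarith)
  rw [hslope] at h1
  calc c * m ^ (c-1) * (b - a) ≤ (b ^ c - a ^ c) / (b - a) * (b - a) :=
        mul_le_mul_of_nonneg_right h1 (by linarith)
    _ = b ^ c - a ^ c := div_mul_cancel₀ _ (by linarith)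

lemma harmonic_le : ∀ N : ℕ, ∑ j ∈ Finset.range N, (1:ℝ)/(j+1) ≤ 1 + Real.log N := by
  intro N
  induction N with
  | zero => simp
  | succ n ih =>
    rw [Finset.sum_range_succ]
    rcases Nat.eq_zero_or_pos n with h0 | hn
    · subst h0; simp
    · have hn' : (0:ℝ) < n := by exact_mod_cast hn
      have h1 : Real.log ((n:ℝ)/(n+1)) ≤ (n:ℝ)/(n+1) - 1 :=
        Real.log_le_sub_one_of_pos (by positivity)
      have h2 : Real.log ((n:ℝ)/(n+1)) = Real.log n - Real.log (n+1) :=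
        Real.log_div (by positivity) (by positivity)
      have h3 : (n:ℝ)/(n+1) - 1 = -(1/((n:ℝ)+1)) := by field_simp; ring
      push_cast
      rw [h2, h3] at h1
      linarith

lemma sum_inv_dist (N p : ℕ) (hp : p < N) :
    ∑ q ∈ (Finset.range N).erase p, 1/|(p:ℝ) - (q:ℝ)| ≤ 2 * (1 + Real.log N) := by
  have hsub : (Finset.range N).erase p ⊆ Finset.range p ∪ Finset.Ico (p+1) N := by
    intro q hq
    simp only [Finset.mem_erase, Finset.mem_range, Finset.mem_union, Finset.mem_Ico] at hq ⊢
    omega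
  have hdisj : Disjoint (Finset.range p) (Finset.Ico (p+1) N) := by
    simp only [Finset.disjoint_left, Finset.mem_range, Finset.mem_Ico]
    omega
  have hnonneg : ∀ q : ℕ, (0:ℝ) ≤ 1/|(p:ℝ) - (q:ℝ)| := fun q => by positivity
  have h1 : ∑ q ∈ (Finset.range N).erase p, 1/|(p:ℝ) - (q:ℝ)|
      ≤ ∑ q ∈ Finset.range p ∪ Finset.Ico (p+1) N, 1/|(p:ℝ) - (q:ℝ)| :=
    Finset.sum_le_sum_of_subset_of_nonneg hsub (fun q _ _ => hnonneg q)
  rw [Finset.sum_union hdisj] at h1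
  have h2 : ∑ q ∈ Finset.range p, 1/|(p:ℝ) - (q:ℝ)| ≤ 1 + Real.log N := by
    have hrefl := Finset.sum_range_reflect (fun q => 1/|(p:ℝ) - (q:ℝ)|) p
    rw [← hrefl]
    have hcong : ∀ j ∈ Finset.range p, 1/|(p:ℝ) - ((p - 1 - j : ℕ):ℝ)| = 1/((j:ℝ)+1) := by
      intro j hj
      rw [Finset.mem_range] at hj
      have : ((p - 1 - j : ℕ):ℝ) = (p:ℝ) - 1 - (j:ℝ) := by
        rw [Nat.cast_sub (by omega), Nat.cast_sub (by omega), Nat.cast_one]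
      rw [this]
      rw [show (p:ℝ) - ((p:ℝ) - 1 - (j:ℝ)) = (j:ℝ)+1 by ring,
        _root_.abs_of_pos (by positivity)]
    rw [Finset.sum_congr rfl hcong]
    calc ∑ j ∈ Finset.range p, 1/((j:ℝ)+1)
        ≤ ∑ j ∈ Finset.range N, 1/((j:ℝ)+1) :=
          Finset.sum_le_sum_of_subset_of_nonneg
            (Finset.range_subset_range.mpr hp.le) (fun j _ _ => by positivity)
      _ ≤ 1 + Real.log N := harmonic_le N
  have h3 : ∑ q ∈ Finset.Ico (p+1) N, 1/|(p:ℝ) - (q:ℝ)| ≤ 1 + Real.log N := by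
    rw [Finset.sum_Ico_eq_sum_range]
    have hcong : ∀ j ∈ Finset.range (N - (p+1)), 1/|(p:ℝ) - ((p + 1 + j : ℕ):ℝ)| = 1/((j:ℝ)+1) := by
      intro j _
      push_cast
      rw [show (p:ℝ) - ((p:ℝ) + 1 + (j:ℝ)) = -((j:ℝ)+1) by ring, abs_neg,
        _root_.abs_of_pos (by positivity)]
    rw [Finset.sum_congr rfl hcong]
    calc ∑ j ∈ Finset.range (N - (p+1)), 1/((j:ℝ)+1)
        ≤ ∑ j ∈ Finset.range N, 1/((j:ℝ)+1) :=
          Finset.sum_le_sum_of_subset_of_nonneg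
            (Finset.range_subset_range.mpr (by omega)) (fun j _ _ => by positivity)
      _ ≤ 1 + Real.log N := harmonic_le N
  linarith

lemma gap_core {c X p q : ℝ} (hc1 : 1 < c) (hc2 : c < 3) (hX : 2 ≤ X)
    (hq : X/2 < q) (hp2 : p ≤ X) (hqp : q < p) :
    1 / (Real.pi * |p ^ c - q ^ c|) ≤ 2 * X ^ (1-c) / |p - q| := by
  have hX0 : (0:ℝ) < X := by linarith
  have hm : (0:ℝ) < X/2 := by linarith
  have hpi : (3:ℝ) ≤ Real.pi := by linarith [Real.pi_gt_three]
  have hd : (0:ℝ) < p - q := by linarith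
  have hgap : c * (X/2) ^ (c-1) * (p - q) ≤ p ^ c - q ^ c := rpow_gap hc1 hm hq.le hqp
  have hgap0 : (0:ℝ) < p ^ c - q ^ c := lt_of_lt_of_le (by positivity) hgap
  rw [_root_.abs_of_pos hgap0, _root_.abs_of_pos hd,
    div_le_div_iff₀ (by positivity) (by positivity)]
  have hprod : (1:ℝ)/4 ≤ X ^ (1-c) * (X/2) ^ (c-1) := by
    have hdiv : (X/2) ^ (c-1) = X ^ (c-1) / 2 ^ (c-1) :=
      Real.div_rpow hX0.le (by norm_num) _
    have hXX : X ^ (1-c) * X ^ (c-1) = 1 := by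
      rw [← Real.rpow_add hX0]
      norm_num
    have h24 : (2:ℝ) ^ (c-1) ≤ 4 := by
      have h := Real.rpow_le_rpow_of_exponent_le (by norm_num : (1:ℝ) ≤ 2)
        (by linarith : c - 1 ≤ (2:ℝ))
      have h4 : (2:ℝ) ^ (2:ℝ) = 4 := by
        rw [show (2:ℝ) = ((2:ℕ):ℝ) from by norm_num, Real.rpow_natCast]
        norm_num
      linarith
    have h20 : (0:ℝ) < (2:ℝ) ^ (c-1) := Real.rpow_pos_of_pos (by norm_num) _
    rw [hdiv, ← mul_div_assoc, hXX]
    exact one_div_le_one_div_of_le h20 h24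
  have h6 : (3:ℝ) ≤ Real.pi * c := by nlinarith
  have hA : (0:ℝ) ≤ 2 * X ^ (1-c) := by positivity
  have s1 : 2 * X^(1-c) * (Real.pi * (c * (X/2)^(c-1) * (p-q)))
      ≤ 2 * X^(1-c) * (Real.pi * (p^c - q^c)) :=
    mul_le_mul_of_nonneg_left (mul_le_mul_of_nonneg_left hgap Real.pi_pos.le) hA
  have hfac : (3:ℝ)/2 ≤ 2 * (X^(1-c) * (X/2)^(c-1)) * (Real.pi * c) := by
    nlinarith [hprod, h6, mul_nonneg (by linarith : (0:ℝ) ≤ X^(1-c) * (X/2)^(c-1) - 1/4)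
      (by linarith : (0:ℝ) ≤ Real.pi * c - 3)]
  have s2 : 1 * (p - q) ≤ 2 * X^(1-c) * (Real.pi * (c * (X/2)^(c-1) * (p-q))) := by
    have h := mul_le_mul_of_nonneg_right hfac hd.le
    calc 1 * (p-q) ≤ 3/2 * (p-q) := by linarith
      _ ≤ 2 * (X^(1-c) * (X/2)^(c-1)) * (Real.pi * c) * (p-q) := h
      _ = 2 * X^(1-c) * (Real.pi * (c * (X/2)^(c-1) * (p-q))) := by ring
  linarith

lemma gap_bound {c X p q : ℝ} (hc1 : 1 < c) (hc2 : c < 3) (hX : 2 ≤ X)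
    (hp : X/2 < p) (hp2 : p ≤ X) (hq : X/2 < q) (hq2 : q ≤ X) (hne : p ≠ q) :
    1 / (Real.pi * |p ^ c - q ^ c|) ≤ 2 * X ^ (1-c) / |p - q| := by
  rcases lt_or_gt_of_ne hne with h | h
  · rw [abs_sub_comm (p ^ c), abs_sub_comm p]
    exact gap_core hc1 hc2 hX hp hq2 h
  · exact gap_core hc1 hc2 hX hq hp2 h

lemma rpow_ne {c p q : ℝ} (hc : 0 < c) (hp : 0 < p) (hq : 0 < q) (hne : p ≠ q) :
    p ^ c - q ^ c ≠ 0 := by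
  rcases lt_or_gt_of_ne hne with h | h
  · have := Real.rpow_lt_rpow hp.le h hc
    intro hx
    linarith
  · have := Real.rpow_lt_rpow hq.le h hc
    intro hx
    linarith

lemma norm_I_triv (X c x : ℝ) (hX : 0 ≤ X) : ‖I X c x‖ ≤ X / 2 := by
  have := intervalIntegral.norm_integral_le_of_norm_le_const
    (C := 1) (f := fun t : ℝ => e (t ^ c * x)) (a := X/2) (b := X)
    (fun t _ => by rw [norm_e])
  calc ‖I X c x‖ ≤ 1 * |X - X/2| := this
    _ = X / 2 := by rw [_root_.abs_of_nonneg (by linarith : (0:ℝ) ≤ X - X/2)]; ring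

lemma norm_I_decay {X c x : ℝ} (hc1 : 1 < c) (hc2 : c < 3) (hX : 2 ≤ X) (hx : x ≠ 0) :
    ‖I X c x‖ ≤ 2 * X ^ (1-c) / |x| := by
  set a : ℝ := X / 2 with ha
  have ha1 : (1:ℝ) ≤ a := by rw [ha]; linarith
  have hab : a < X := by rw [ha]; linarith
  have hpos : ∀ t : ℝ, t ∈ Set.uIcc a X → (0:ℝ) < t := by
    intro t ht
    rw [Set.uIcc_of_le hab.le] at ht
    linarith [ht.1]
  set K : ℂ := (2 * (Real.pi:ℂ) * Complex.I * (x:ℂ) * (c:ℂ))⁻¹ with hK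
  have hKne : (2 * (Real.pi:ℂ) * Complex.I * (x:ℂ) * (c:ℂ)) ≠ 0 := by
    simp [Real.pi_ne_zero, Complex.I_ne_zero, hx]
    intro h
    exact absurd h (by exact_mod_cast (by linarith : c ≠ 0))
  have hnormK : ‖K‖ = (2 * Real.pi * |x| * c)⁻¹ := by
    rw [hK, norm_inv]
    congr 1
    simp only [norm_mul, Complex.norm_I, Complex.norm_real, Complex.norm_ofNat,
      Real.norm_eq_abs, mul_one]
    rw [_root_.abs_of_nonneg Real.pi_pos.le, _root_.abs_of_nonneg (by linarith : (0:ℝ) ≤ c)]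
  set u : ℝ → ℂ := fun t => ((t ^ (1-c) : ℝ) : ℂ) * K with hu
  set u' : ℝ → ℂ := fun t => (((1-c) * t ^ (-c) : ℝ) : ℂ) * K with hu'
  set v : ℝ → ℂ := fun t => e (t ^ c * x) with hv
  set v' : ℝ → ℂ := fun t => e (t ^ c * x) *
    (2 * (Real.pi:ℂ) * Complex.I * (x:ℂ) * ((c * t ^ (c-1) : ℝ) : ℂ)) with hv'
  have hderu : ∀ t ∈ Set.uIcc a X, HasDerivAt u (u' t) t := by
    intro t ht
    have ht0 := hpos t ht
    have h1 : HasDerivAt (fun s : ℝ => s ^ (1-c)) ((1-c) * t ^ ((1-c)-1)) t :=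
      Real.hasDerivAt_rpow_const (Or.inl ht0.ne')
    have h2 : (1-c)-1 = -c := by ring
    rw [h2] at h1
    exact (h1.ofReal_comp).mul_const K
  have hderv : ∀ t ∈ Set.uIcc a X, HasDerivAt v (v' t) t := by
    intro t ht
    have ht0 := hpos t ht
    have h1 : HasDerivAt (fun s : ℝ => s ^ c) (c * t ^ (c-1)) t :=
      Real.hasDerivAt_rpow_const (Or.inl ht0.ne')
    have h2 : HasDerivAt (fun s : ℝ => ((s ^ c : ℝ) : ℂ))
        (((c * t ^ (c-1) : ℝ) : ℂ)) t := h1.ofReal_comp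
    have h3 := ((h2.const_mul (2 * (Real.pi:ℂ) * Complex.I * (x:ℂ))).cexp)
    have hfun : v = fun s : ℝ =>
        Complex.exp (2 * (Real.pi:ℂ) * Complex.I * (x:ℂ) * ((s ^ c : ℝ) : ℂ)) := by
      funext s
      rw [hv]
      simp only [e]
      push_cast
      ring_nf
    rw [hfun]
    convert h3 using 1
    rw [hv']
    simp only [e]
    push_cast
    ring_nf
  have hrpowC : ∀ r : ℝ, ContinuousOn (fun t : ℝ => t ^ r) (Set.uIcc a X) := by
    intro r t ht
    exact (Real.continuousAt_rpow_const t r (Or.inl (hpos t ht).ne')).continuousWithinAt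
  have hcontu' : IntervalIntegrable u' volume a X := by
    apply ContinuousOn.intervalIntegrable
    exact (Complex.continuous_ofReal.comp_continuousOn
      (continuousOn_const.mul (hrpowC (-c)))).mul continuousOn_const
  have hconte : Continuous e := by unfold e; fun_prop
  have hcontv' : IntervalIntegrable v' volume a X := by
    apply ContinuousOn.intervalIntegrable
    exact (hconte.comp_continuousOn ((hrpowC c).mul continuousOn_const)).mul
      (continuousOn_const.mul (Complex.continuous_ofReal.comp_continuousOn
        (continuousOn_const.mul (hrpowC (c-1)))))
  have hparts := intervalIntegral.integral_mul_deriv_eq_deriv_mul hderu hderv hcontu' hcontv'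
  have hI : I X c x = ∫ t in a..X, u t * v' t := by
    rw [show _root_.I X c x = ∫ t in a..X, e (t ^ c * x) from rfl]
    apply intervalIntegral.integral_congr
    intro t ht
    have ht0 := hpos t ht
    have hrr : t ^ (1-c) * t ^ (c-1) = 1 := by
      rw [← Real.rpow_add ht0]
      norm_num
    show e (t ^ c * x) = u t * v' t
    rw [hu, hv']
    have : ((t ^ (1-c) : ℝ) : ℂ) * K * (e (t ^ c * x) *
        (2 * (Real.pi:ℂ) * Complex.I * (x:ℂ) * ((c * t ^ (c-1) : ℝ) : ℂ)))
        = e (t ^ c * x) * ((2 * (Real.pi:ℂ) * Complex.I * (x:ℂ) * (c:ℂ))⁻¹ *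
          (2 * (Real.pi:ℂ) * Complex.I * (x:ℂ) * (c:ℂ))) * ((t ^ (1-c) * t ^ (c-1) : ℝ) : ℂ) := by
      rw [hK]
      push_cast
      ring
    rw [this, inv_mul_cancel₀ hKne, hrr]
    simp
  have hInorm : ∫ t in a..X, ‖u' t * v t‖ = (a ^ (1-c) - X ^ (1-c)) * ‖K‖ := by
    have hcong : ∀ t ∈ Set.uIcc a X, ‖u' t * v t‖ = (c-1) * t ^ (-c) * ‖K‖ := by
      intro t ht
      have ht0 := hpos t ht
      rw [hu', hv]
      rw [norm_mul, norm_mul, norm_e, mul_one, Complex.norm_real, Real.norm_eq_abs, abs_mul]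
      rw [_root_.abs_of_nonpos (by linarith : 1 - c ≤ 0),
        _root_.abs_of_nonneg (Real.rpow_nonneg ht0.le _)]
      ring
    rw [intervalIntegral.integral_congr hcong]
    have h0not : (0:ℝ) ∉ Set.uIcc a X := fun h => absurd (hpos 0 h) (lt_irrefl 0)
    have : ∫ t in a..X, (c-1) * t ^ (-c) * ‖K‖
        = ((c-1) * ((X ^ (-c+1) - a ^ (-c+1)) / (-c+1))) * ‖K‖ := by
      rw [intervalIntegral.integral_mul_const, intervalIntegral.integral_const_mul,
        integral_rpow (Or.inr ⟨by intro h; rw [neg_eq_iff_eq_neg] at h; linarith [h], h0not⟩)]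
    rw [this]
    have he1 : -c + 1 = 1 - c := by ring
    rw [he1]
    have h1c : (1:ℝ) - c ≠ 0 := by intro h; linarith
    have hkey : (c-1) * ((X ^ (1-c) - a ^ (1-c)) / (1-c)) = a ^ (1-c) - X ^ (1-c) := by
      field_simp
      ring
    rw [hkey]
  have hbound : ‖I X c x‖ ≤ 3 * a ^ (1-c) * ‖K‖ := by
    rw [hI, hparts]
    have hnu : ∀ t : ℝ, 0 < t → ‖u t‖ = t ^ (1-c) * ‖K‖ := by
      intro t ht0
      rw [hu]
      rw [norm_mul, Complex.norm_real, Real.norm_eq_abs,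
        _root_.abs_of_nonneg (Real.rpow_nonneg ht0.le _)]
    have h1 : ‖∫ t in a..X, u' t * v t‖ ≤ (a ^ (1-c) - X ^ (1-c)) * ‖K‖ := by
      rw [← hInorm]
      exact intervalIntegral.norm_integral_le_integral_norm hab.le
    have hXa : X ^ (1-c) ≤ a ^ (1-c) :=
      Real.rpow_le_rpow_of_nonpos (by linarith) hab.le (by linarith)
    have hX0 : (0:ℝ) ≤ X ^ (1-c) := Real.rpow_nonneg (by linarith) _
    have hK0 : (0:ℝ) ≤ ‖K‖ := norm_nonneg _
    calc ‖u X * v X - u a * v a - ∫ t in a..X, u' t * v t‖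
        ≤ ‖u X * v X - u a * v a‖ + ‖∫ t in a..X, u' t * v t‖ := norm_sub_le _ _
      _ ≤ ‖u X * v X‖ + ‖u a * v a‖ + ‖∫ t in a..X, u' t * v t‖ := by
          linarith [norm_sub_le (u X * v X) (u a * v a)]
      _ ≤ X ^ (1-c) * ‖K‖ + a ^ (1-c) * ‖K‖ + (a ^ (1-c) - X ^ (1-c)) * ‖K‖ := by
          have hnv : ∀ t : ℝ, ‖v t‖ = 1 := fun t => norm_e _
          have e1 : ‖u X * v X‖ = X ^ (1-c) * ‖K‖ := by
            rw [norm_mul, hnu X (by linarith), hnv, mul_one]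
          have e2 : ‖u a * v a‖ = a ^ (1-c) * ‖K‖ := by
            rw [norm_mul, hnu a (by linarith), hnv, mul_one]
          linarith
      _ ≤ 3 * a ^ (1-c) * ‖K‖ := by nlinarith
  have ha4 : a ^ (1-c) ≤ 4 * X ^ (1-c) := by
    have key : a ^ (1-c) = X ^ (1-c) * (2:ℝ) ^ (c-1) := by
      rw [ha, Real.div_rpow (by linarith) (by norm_num), show (1:ℝ)-c = -(c-1) by ring,
        Real.rpow_neg (by norm_num : (0:ℝ) ≤ 2), div_eq_mul_inv, inv_inv]
    rw [key]
    have h24 : (2:ℝ) ^ (c-1) ≤ 4 := by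
      have h := Real.rpow_le_rpow_of_exponent_le (by norm_num : (1:ℝ) ≤ 2)
        (by linarith : c - 1 ≤ (2:ℝ))
      have h4 : (2:ℝ) ^ (2:ℝ) = 4 := by
        rw [show (2:ℝ) = ((2:ℕ):ℝ) from by norm_num, Real.rpow_natCast]
        norm_num
      linarith [h, h4.le]
    have hX0' : (0:ℝ) ≤ X ^ (1-c) := Real.rpow_nonneg (by linarith) _
    nlinarith
  have hKle : ‖K‖ ≤ 1 / (6 * |x|) := by
    rw [hnormK]
    have hpi : (3:ℝ) ≤ Real.pi := by linarith [Real.pi_gt_three]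
    have hx0 : 0 < |x| := abs_pos.mpr hx
    rw [inv_eq_one_div]
    apply div_le_div_of_nonneg_left (by norm_num) (by positivity)
    have k1 : 2 * Real.pi * |x| * 1 ≤ 2 * Real.pi * |x| * c :=
      mul_le_mul_of_nonneg_left hc1.le (by positivity)
    have k2 : 3 * |x| ≤ Real.pi * |x| := mul_le_mul_of_nonneg_right hpi hx0.le
    linarith
  have hX1c : (0:ℝ) ≤ X ^ (1-c) := Real.rpow_nonneg (by linarith) _
  have hx0 : 0 < |x| := abs_pos.mpr hx
  calc ‖I X c x‖ ≤ 3 * a ^ (1-c) * ‖K‖ := hbound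
    _ ≤ 3 * (4 * X ^ (1-c)) * (1 / (6 * |x|)) := by
        apply mul_le_mul ?_ hKle (norm_nonneg _) (by positivity)
        nlinarith
    _ = 2 * X ^ (1-c) / |x| := by field_simp; ring

set_option maxHeartbeats 1000000 in
lemma S_bound {c η X : ℝ} (hc1 : 1 < c) (hc2 : c < 3) (hη : 0 < η)
    (hX : 3 ≤ X) (hlog : 1 ≤ Real.log X) :
    (∫ x in (-(X ^ (1-c-η)))..(X ^ (1-c-η)), ‖S X c x‖ ^ 2)
      ≤ 28 * X ^ (2-c) * Real.log X ^ 3 := by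
  have hX0 : (0:ℝ) < X := by linarith
  have hX2 : (2:ℝ) ≤ X := by linarith
  set τ : ℝ := X ^ (1-c-η) with hτ
  set N : ℕ := ⌈X⌉₊ + 1 with hN
  set P : Finset ℕ := (Finset.range N).filter
      (fun p : ℕ => p.Prime ∧ X / 2 < (p : ℝ) ∧ (p : ℝ) ≤ X) with hP
  have hτ0 : (0:ℝ) ≤ τ := Real.rpow_nonneg hX0.le _
  have hτle : τ ≤ X ^ (1-c) :=
    Real.rpow_le_rpow_of_exponent_le (by linarith) (by linarith)
  have hmemP : ∀ p ∈ P, p.Prime ∧ X / 2 < (p:ℝ) ∧ (p:ℝ) ≤ X := by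
    intro p hp
    exact (Finset.mem_filter.mp hp).2
  have hPsub : P ⊆ Finset.range N := Finset.filter_subset _ _
  have hlogp : ∀ p ∈ P, 0 ≤ Real.log p ∧ Real.log p ≤ Real.log X := by
    intro p hp
    obtain ⟨hpp, hp1, hp2⟩ := hmemP p hp
    have h1 : (1:ℝ) ≤ (p:ℝ) := by exact_mod_cast hpp.one_lt.le
    exact ⟨Real.log_nonneg h1, Real.log_le_log (by linarith) hp2⟩
  -- expansion
  have hexp : ∀ x : ℝ, S X c x * (starRingEnd ℂ) (S X c x)
      = ∑ p ∈ P, ∑ q ∈ P, ((Real.log p : ℂ) * (Real.log q : ℂ))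
          * e (((p:ℝ) ^ c - (q:ℝ) ^ c) * x) := by
    intro x
    rw [S, map_sum, Finset.sum_mul_sum]
    apply Finset.sum_congr rfl
    intro p _
    apply Finset.sum_congr rfl
    intro q _
    rw [map_mul, Complex.conj_ofReal, conj_e, mul_mul_mul_comm, e_mul]
    congr 1
    ring
  have hSc : Continuous (S X c) := by
    unfold S
    exact continuous_finset_sum _ (fun p _ => continuous_const.mul (cont_e _))
  have hintS : IntervalIntegrable (fun x => S X c x * (starRingEnd ℂ) (S X c x))
      volume (-τ) τ := (hSc.mul hSc.star).intervalIntegrable _ _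
  have hre : ∀ x : ℝ, (S X c x * (starRingEnd ℂ) (S X c x)).re = ‖S X c x‖ ^ 2 := by
    intro x
    rw [Complex.mul_conj]
    simp [Complex.normSq_eq_norm_sq, ← Complex.ofReal_pow]
  have hstep1 : (∫ x in (-τ)..τ, ‖S X c x‖ ^ 2)
      = (∫ x in (-τ)..τ, S X c x * (starRingEnd ℂ) (S X c x)).re := by
    calc (∫ x in (-τ)..τ, ‖S X c x‖ ^ 2)
        = ∫ x in (-τ)..τ, Complex.reCLM (S X c x * (starRingEnd ℂ) (S X c x)) :=
          intervalIntegral.integral_congr (fun x _ => (hre x).symm)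
      _ = Complex.reCLM (∫ x in (-τ)..τ, S X c x * (starRingEnd ℂ) (S X c x)) :=
          ContinuousLinearMap.intervalIntegral_comp_comm _ hintS
      _ = (∫ x in (-τ)..τ, S X c x * (starRingEnd ℂ) (S X c x)).re := rfl
  -- interchange
  have hintterm : ∀ (θ : ℝ), IntervalIntegrable (fun x : ℝ => e (θ * x)) volume (-τ) τ :=
    fun θ => (cont_e θ).intervalIntegrable _ _
  have hstep2 : (∫ x in (-τ)..τ, S X c x * (starRingEnd ℂ) (S X c x))
      = ∑ p ∈ P, ∑ q ∈ P, ((Real.log p : ℂ) * (Real.log q : ℂ))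
          * ∫ x in (-τ)..τ, e (((p:ℝ) ^ c - (q:ℝ) ^ c) * x) := by
    have hint2 : ∀ p ∈ P, IntervalIntegrable
        (fun x => ∑ q ∈ P, ((Real.log p : ℂ) * (Real.log q : ℂ))
          * e (((p:ℝ) ^ c - (q:ℝ) ^ c) * x)) volume (-τ) τ :=
      fun p _ => (continuous_finset_sum _
        (fun q _ => continuous_const.mul (cont_e _))).intervalIntegrable _ _
    calc (∫ x in (-τ)..τ, S X c x * (starRingEnd ℂ) (S X c x))
        = ∫ x in (-τ)..τ, ∑ p ∈ P, ∑ q ∈ P, ((Real.log p : ℂ) * (Real.log q : ℂ))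
            * e (((p:ℝ) ^ c - (q:ℝ) ^ c) * x) :=
          intervalIntegral.integral_congr (fun x _ => hexp x)
      _ = ∑ p ∈ P, ∫ x in (-τ)..τ, ∑ q ∈ P, ((Real.log p : ℂ) * (Real.log q : ℂ))
            * e (((p:ℝ) ^ c - (q:ℝ) ^ c) * x) :=
          intervalIntegral.integral_finset_sum hint2
      _ = ∑ p ∈ P, ∑ q ∈ P, ((Real.log p : ℂ) * (Real.log q : ℂ))
            * ∫ x in (-τ)..τ, e (((p:ℝ) ^ c - (q:ℝ) ^ c) * x) := by
          apply Finset.sum_congr rfl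
          intro p _
          rw [intervalIntegral.integral_finset_sum
            (fun q _ => (hintterm _).const_mul _)]
          exact Finset.sum_congr rfl (fun q _ => intervalIntegral.integral_const_mul _ _)
  -- termwise bounds
  have hdiag : ∀ p ∈ P, ‖((Real.log p : ℂ) * (Real.log p : ℂ))
      * ∫ x in (-τ)..τ, e (((p:ℝ) ^ c - (p:ℝ) ^ c) * x)‖
      ≤ Real.log X ^ 2 * (2 * τ) := by
    intro p hp
    obtain ⟨hl0, hlX⟩ := hlogp p hp
    rw [norm_mul, norm_mul, Complex.norm_real, Real.norm_eq_abs,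
      _root_.abs_of_nonneg hl0]
    rw [sub_self]
    have hJ := norm_integral_e_le_triv 0 τ hτ0
    calc Real.log p * Real.log p * ‖∫ x in (-τ)..τ, e (0 * x)‖
        ≤ (Real.log X * Real.log X) * (2 * τ) := by
          apply mul_le_mul (mul_le_mul hlX hlX hl0 (by linarith)) hJ (norm_nonneg _)
          nlinarith
      _ = Real.log X ^ 2 * (2 * τ) := by ring
  have hoff : ∀ p ∈ P, ∀ q ∈ P, q ≠ p → ‖((Real.log p : ℂ) * (Real.log q : ℂ))
      * ∫ x in (-τ)..τ, e (((p:ℝ) ^ c - (q:ℝ) ^ c) * x)‖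
      ≤ Real.log X ^ 2 * (2 * X ^ (1-c) / |(p:ℝ) - (q:ℝ)|) := by
    intro p hp q hq hqp
    obtain ⟨hpp, hp1, hp2⟩ := hmemP p hp
    obtain ⟨hqq, hq1, hq2⟩ := hmemP q hq
    obtain ⟨hl0p, hlXp⟩ := hlogp p hp
    obtain ⟨hl0q, hlXq⟩ := hlogp q hq
    have hne : (p:ℝ) ≠ (q:ℝ) := by
      intro h
      exact hqp (by exact_mod_cast h.symm)
    have hθ : (p:ℝ) ^ c - (q:ℝ) ^ c ≠ 0 :=
      rpow_ne (by linarith) (by linarith) (by linarith) hne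
    have hJ := norm_integral_e_le ((p:ℝ) ^ c - (q:ℝ) ^ c) τ hθ
    have hJ2 := gap_bound hc1 hc2 hX2 hp1 hp2 hq1 hq2 hne
    rw [norm_mul, norm_mul, Complex.norm_real, Complex.norm_real, Real.norm_eq_abs,
      Real.norm_eq_abs, _root_.abs_of_nonneg hl0p, _root_.abs_of_nonneg hl0q]
    calc Real.log p * Real.log q * ‖∫ x in (-τ)..τ, e (((p:ℝ) ^ c - (q:ℝ) ^ c) * x)‖
        ≤ (Real.log X * Real.log X) * (2 * X ^ (1-c) / |(p:ℝ) - (q:ℝ)|) := by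
          apply mul_le_mul (mul_le_mul hlXp hlXq hl0q (by linarith)) (hJ.trans hJ2)
            (norm_nonneg _)
          nlinarith
      _ = Real.log X ^ 2 * (2 * X ^ (1-c) / |(p:ℝ) - (q:ℝ)|) := by ring
  -- sum bound
  have hNX : (N:ℝ) ≤ 2 * X := by
    have h1 : (⌈X⌉₊ : ℝ) < X + 1 := Nat.ceil_lt_add_one hX0.le
    have : (N:ℝ) = (⌈X⌉₊:ℝ) + 1 := by push_cast [hN]; ring
    linarith
  have hlogN : 1 + Real.log N ≤ 3 * Real.log X := by
    have hN1 : (1:ℝ) ≤ (N:ℝ) := by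
      have : 1 ≤ N := by omega
      exact_mod_cast this
    have h1 : Real.log N ≤ Real.log (2 * X) := Real.log_le_log (by linarith) hNX
    rw [Real.log_mul (by norm_num) (by linarith)] at h1
    have h2 : Real.log 2 ≤ 1 := by
      have := Real.log_le_sub_one_of_pos (by norm_num : (0:ℝ) < 2)
      linarith
    linarith
  have hinner : ∀ p ∈ P, ∑ q ∈ P.erase p, Real.log X ^ 2 * (2 * X ^ (1-c) / |(p:ℝ) - (q:ℝ)|)
      ≤ Real.log X ^ 2 * (2 * X ^ (1-c)) * (2 * (1 + Real.log N)) := by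
    intro p hp
    have hpN : p < N := Finset.mem_range.mp (hPsub hp)
    have hXc0 : (0:ℝ) ≤ X ^ (1-c) := Real.rpow_nonneg hX0.le _
    have hc0 : (0:ℝ) ≤ Real.log X ^ 2 * (2 * X ^ (1-c)) := by positivity
    have hsum : ∑ q ∈ P.erase p, 1 / |(p:ℝ) - (q:ℝ)| ≤ 2 * (1 + Real.log N) := by
      calc ∑ q ∈ P.erase p, 1 / |(p:ℝ) - (q:ℝ)|
          ≤ ∑ q ∈ (Finset.range N).erase p, 1 / |(p:ℝ) - (q:ℝ)| :=
            Finset.sum_le_sum_of_subset_of_nonneg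
              (Finset.erase_subset_erase _ hPsub) (fun q _ _ => by positivity)
        _ ≤ 2 * (1 + Real.log N) := sum_inv_dist N p hpN
    calc ∑ q ∈ P.erase p, Real.log X ^ 2 * (2 * X ^ (1-c) / |(p:ℝ) - (q:ℝ)|)
        = Real.log X ^ 2 * (2 * X ^ (1-c)) * ∑ q ∈ P.erase p, 1 / |(p:ℝ) - (q:ℝ)| := by
          rw [Finset.mul_sum]
          apply Finset.sum_congr rfl
          intro q _
          ring
      _ ≤ Real.log X ^ 2 * (2 * X ^ (1-c)) * (2 * (1 + Real.log N)) := by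
          exact mul_le_mul_of_nonneg_left hsum hc0
  have hcard : (P.card : ℝ) ≤ 2 * X := by
    have h1 : P.card ≤ N := by
      calc P.card ≤ (Finset.range N).card := Finset.card_le_card hPsub
        _ = N := Finset.card_range N
    calc (P.card : ℝ) ≤ (N:ℝ) := by exact_mod_cast h1
      _ ≤ 2 * X := hNX
  have hXX : X * X ^ (1-c) = X ^ (2-c) := by
    nth_rewrite 1 [show X = X ^ (1:ℝ) from (Real.rpow_one X).symm]
    rw [← Real.rpow_add hX0, show (1:ℝ)+(1-c) = 2-c from by ring]
  -- assemble
  rw [hstep1]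
  have hfin : (∫ x in (-τ)..τ, S X c x * (starRingEnd ℂ) (S X c x)).re
      ≤ 28 * X ^ (2-c) * Real.log X ^ 3 := by
    have hB : ∀ p ∈ P, ‖∑ q ∈ P, ((Real.log p : ℂ) * (Real.log q : ℂ))
        * ∫ x in (-τ)..τ, e (((p:ℝ) ^ c - (q:ℝ) ^ c) * x)‖
        ≤ Real.log X ^ 2 * (2 * τ)
          + Real.log X ^ 2 * (2 * X ^ (1-c)) * (2 * (1 + Real.log N)) := by
      intro p hp
      rw [← Finset.add_sum_erase _ _ hp]
      calc ‖_ + _‖ ≤ ‖((Real.log p : ℂ) * (Real.log p : ℂ))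
            * ∫ x in (-τ)..τ, e (((p:ℝ) ^ c - (p:ℝ) ^ c) * x)‖
            + ‖∑ q ∈ P.erase p, ((Real.log p : ℂ) * (Real.log q : ℂ))
            * ∫ x in (-τ)..τ, e (((p:ℝ) ^ c - (q:ℝ) ^ c) * x)‖ := norm_add_le _ _
        _ ≤ Real.log X ^ 2 * (2 * τ)
            + Real.log X ^ 2 * (2 * X ^ (1-c)) * (2 * (1 + Real.log N)) := by
            apply add_le_add (hdiag p hp)
            calc ‖∑ q ∈ P.erase p, ((Real.log p : ℂ) * (Real.log q : ℂ))
                * ∫ x in (-τ)..τ, e (((p:ℝ) ^ c - (q:ℝ) ^ c) * x)‖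
                ≤ ∑ q ∈ P.erase p, ‖((Real.log p : ℂ) * (Real.log q : ℂ))
                  * ∫ x in (-τ)..τ, e (((p:ℝ) ^ c - (q:ℝ) ^ c) * x)‖ := norm_sum_le _ _
              _ ≤ ∑ q ∈ P.erase p, Real.log X ^ 2 * (2 * X ^ (1-c) / |(p:ℝ) - (q:ℝ)|) := by
                  apply Finset.sum_le_sum
                  intro q hq
                  exact hoff p hp q (Finset.mem_of_mem_erase hq)
                    (Finset.ne_of_mem_erase hq)
              _ ≤ _ := hinner p hp
    calc (∫ x in (-τ)..τ, S X c x * (starRingEnd ℂ) (S X c x)).re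
        ≤ ‖∫ x in (-τ)..τ, S X c x * (starRingEnd ℂ) (S X c x)‖ := Complex.re_le_norm _
      _ = ‖∑ p ∈ P, ∑ q ∈ P, ((Real.log p : ℂ) * (Real.log q : ℂ))
            * ∫ x in (-τ)..τ, e (((p:ℝ) ^ c - (q:ℝ) ^ c) * x)‖ := by rw [hstep2]
      _ ≤ ∑ p ∈ P, ‖∑ q ∈ P, ((Real.log p : ℂ) * (Real.log q : ℂ))
            * ∫ x in (-τ)..τ, e (((p:ℝ) ^ c - (q:ℝ) ^ c) * x)‖ := norm_sum_le _ _
      _ ≤ ∑ p ∈ P, (Real.log X ^ 2 * (2 * τ)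
            + Real.log X ^ 2 * (2 * X ^ (1-c)) * (2 * (1 + Real.log N))) :=
          Finset.sum_le_sum hB
      _ = (P.card : ℝ) * (Real.log X ^ 2 * (2 * τ)
            + Real.log X ^ 2 * (2 * X ^ (1-c)) * (2 * (1 + Real.log N))) := by
          rw [Finset.sum_const, nsmul_eq_mul]
      _ ≤ 28 * X ^ (2-c) * Real.log X ^ 3 := by
          have hXc0 : (0:ℝ) ≤ X ^ (1-c) := Real.rpow_nonneg hX0.le _
          have hlogN0 : (0:ℝ) ≤ 1 + Real.log N := by
            have : (0:ℝ) ≤ Real.log N := Real.log_natCast_nonneg N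
            linarith
          have hbr : Real.log X ^ 2 * (2 * τ)
              + Real.log X ^ 2 * (2 * X ^ (1-c)) * (2 * (1 + Real.log N))
              ≤ Real.log X ^ 2 * (2 * X ^ (1-c))
              + Real.log X ^ 2 * (2 * X ^ (1-c)) * (6 * Real.log X) := by
            apply add_le_add
            · nlinarith [sq_nonneg (Real.log X)]
            · apply mul_le_mul_of_nonneg_left (by linarith) (by positivity)
          have hcard0 : (0:ℝ) ≤ (P.card : ℝ) := Nat.cast_nonneg _
          have hbr0 : (0:ℝ) ≤ Real.log X ^ 2 * (2 * X ^ (1-c))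
              + Real.log X ^ 2 * (2 * X ^ (1-c)) * (6 * Real.log X) := by positivity
          calc (P.card : ℝ) * (Real.log X ^ 2 * (2 * τ)
                + Real.log X ^ 2 * (2 * X ^ (1-c)) * (2 * (1 + Real.log N)))
              ≤ (2 * X) * (Real.log X ^ 2 * (2 * X ^ (1-c))
                + Real.log X ^ 2 * (2 * X ^ (1-c)) * (6 * Real.log X)) :=
              mul_le_mul hcard hbr (by positivity) (by linarith)
            _ = 4 * (X * X ^ (1-c)) * Real.log X ^ 2
                + 24 * (X * X ^ (1-c)) * (Real.log X ^ 2 * Real.log X) := by ring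
            _ = 4 * X ^ (2-c) * Real.log X ^ 2 + 24 * X ^ (2-c) * Real.log X ^ 3 := by
                rw [hXX]; ring
            _ ≤ 28 * X ^ (2-c) * Real.log X ^ 3 := by
                have hX2c : (0:ℝ) ≤ X ^ (2-c) := Real.rpow_nonneg hX0.le _
                nlinarith [mul_nonneg (mul_nonneg hX2c (sq_nonneg (Real.log X)))
                  (by linarith : (0:ℝ) ≤ Real.log X - 1)]
  exact hfin

end Helpers

set_option maxHeartbeats 1000000 in
/-- Lemma 2.7: for `1 < c < 37/18`, `c ≠ 2`, sufficiently small `η > 0`,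
sufficiently large `X`, with `τ = X^{1−c−η}`, one has
`∫_{−τ}^{τ} |S(x)|² dx ≪_{c,η} X^{2−c} (log X)³` and
`∫_{−τ}^{τ} |I(x)|² dx ≪_{c,η} X^{2−c} log X`. -/
theorem stmt9 (c : ℝ) (hc1 : 1 < c) (hc2 : c < 37 / 18) (hc3 : c ≠ 2) :
    ∃ η₀ > 0, ∀ η : ℝ, 0 < η → η < η₀ →
    ∃ C > 0, ∃ X₀ : ℝ, ∀ X ≥ X₀, ∀ τ : ℝ, τ = X ^ (1 - c - η) →
      (∫ x in (-τ)..τ, ‖S X c x‖ ^ 2) ≤ C * X ^ (2 - c) * (Real.log X) ^ 3 ∧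
      (∫ x in (-τ)..τ, ‖I X c x‖ ^ 2) ≤ C * X ^ (2 - c) * Real.log X := by
  refine ⟨1/2, by norm_num, ?_⟩
  intro η hη hη2
  refine ⟨100, by norm_num, 3, ?_⟩
  intro X hX τ hτdef
  have hc2' : c < 3 := by linarith
  have hX0 : (0:ℝ) < X := by linarith
  have hX2 : (2:ℝ) ≤ X := by linarith
  have hlog : 1 ≤ Real.log X := by
    have h1 : Real.exp 1 ≤ X := by
      have := Real.exp_one_lt_d9
      linarith
    calc (1:ℝ) = Real.log (Real.exp 1) := (Real.log_exp 1).symm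
      _ ≤ Real.log X := Real.log_le_log (Real.exp_pos 1) h1
  have hX2c : (0:ℝ) < X ^ (2-c) := Real.rpow_pos_of_pos hX0 _
  subst hτdef
  constructor
  · -- S part
    have hSB := S_bound hc1 hc2' hη hX hlog
    have hl3 : (0:ℝ) ≤ Real.log X ^ 3 := by positivity
    calc (∫ x in (-(X ^ (1-c-η)))..(X ^ (1-c-η)), ‖S X c x‖ ^ 2)
        ≤ 28 * X ^ (2-c) * Real.log X ^ 3 := hSB
      _ ≤ 100 * X ^ (2-c) * Real.log X ^ 3 := by nlinarith
  · -- I part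
    set τ : ℝ := X ^ (1-c-η) with hτ
    set δ : ℝ := X ^ (-c) with hδ
    have hδ0 : (0:ℝ) < δ := Real.rpow_pos_of_pos hX0 _
    have hτ0 : (0:ℝ) < τ := Real.rpow_pos_of_pos hX0 _
    have hδτ : δ ≤ τ :=
      Real.rpow_le_rpow_of_exponent_le (by linarith) (by linarith)
    by_cases hInt : IntervalIntegrable (fun x => ‖I X c x‖ ^ 2) volume (-τ) τ
    · have hseg1 : Set.uIcc (-τ) (-δ) ⊆ Set.uIcc (-τ) τ := by
        rw [Set.uIcc_of_le (by linarith), Set.uIcc_of_le (by linarith)]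
        exact Set.Icc_subset_Icc (le_refl _) (by linarith)
      have hseg2 : Set.uIcc (-δ) δ ⊆ Set.uIcc (-τ) τ := by
        rw [Set.uIcc_of_le (by linarith), Set.uIcc_of_le (by linarith)]
        exact Set.Icc_subset_Icc (by linarith) (by linarith)
      have hseg3 : Set.uIcc δ τ ⊆ Set.uIcc (-τ) τ := by
        rw [Set.uIcc_of_le (by linarith), Set.uIcc_of_le (by linarith)]
        exact Set.Icc_subset_Icc (by linarith) (le_refl _)
      have hi1 := hInt.mono_set hseg1
      have hi2 := hInt.mono_set hseg2
      have hi3 := hInt.mono_set hseg3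
      have e1 := intervalIntegral.integral_add_adjacent_intervals hi1 hi2
      have e2 := intervalIntegral.integral_add_adjacent_intervals (hi1.trans hi2) hi3
      have hδinv : δ⁻¹ = X ^ c := by
        rw [hδ, Real.rpow_neg hX0.le, inv_inv]
      have hptsq : ∀ x : ℝ, x ≠ 0 → ‖I X c x‖ ^ 2 ≤ (2 * X ^ (1-c)) ^ 2 * x ^ (-2:ℤ) := by
        intro x hx
        have h := norm_I_decay hc1 hc2' hX2 hx
        have h2 := pow_le_pow_left₀ (norm_nonneg _) h 2
        calc ‖I X c x‖ ^ 2 ≤ (2 * X ^ (1-c) / |x|) ^ 2 := h2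
          _ = (2 * X ^ (1-c)) ^ 2 * x ^ (-2:ℤ) := by
              rw [div_pow, sq_abs, div_eq_mul_inv, zpow_neg]
              norm_num
      have hval : (2 * X ^ (1-c)) ^ 2 * X ^ c = 4 * X ^ (2-c) := by
        have hXX2 : X ^ (1-c) * X ^ (1-c) * X ^ c = X ^ (2-c) := by
          rw [← Real.rpow_add hX0, ← Real.rpow_add hX0,
            show (1-c)+(1-c)+c = 2-c from by ring]
        nlinarith [hXX2]
      -- side integrals
      have hside : ∀ a b : ℝ, (0:ℝ) ∉ Set.uIcc a b → a ≤ b →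
          (∀ x ∈ Set.Icc a b, x ≠ 0) →
          IntervalIntegrable (fun x => ‖I X c x‖ ^ 2) volume a b →
          (∫ x in a..b, ‖I X c x‖ ^ 2)
            ≤ (2 * X ^ (1-c)) ^ 2 * ((b ^ (-1:ℤ) - a ^ (-1:ℤ)) / (-1:ℤ)) := by
        intro a b h0 hab hne hi
        have hgi : IntervalIntegrable (fun x : ℝ => (2 * X ^ (1-c)) ^ 2 * x ^ (-2:ℤ))
            volume a b :=
          (intervalIntegral.intervalIntegrable_zpow (Or.inr h0)).const_mul _
        have hmono := intervalIntegral.integral_mono_on hab hi hgi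
          (fun x hx => hptsq x (hne x hx))
        rw [intervalIntegral.integral_const_mul,
          integral_zpow (Or.inr ⟨by norm_num, h0⟩)] at hmono
        exact_mod_cast hmono
      have hB3 : (∫ x in δ..τ, ‖I X c x‖ ^ 2) ≤ 4 * X ^ (2-c) := by
        have h0 : (0:ℝ) ∉ Set.uIcc δ τ := by
          rw [Set.uIcc_of_le hδτ]
          intro h
          exact absurd h.1 (by linarith)
        have := hside δ τ h0 hδτ
          (fun x hx => by have h1 := hx.1; intro hh; rw [hh] at h1; linarith) hi3
        have hcomp : (2 * X ^ (1-c)) ^ 2 * ((τ ^ (-1:ℤ) - δ ^ (-1:ℤ)) / (-1:ℤ))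
            ≤ 4 * X ^ (2-c) := by
          rw [zpow_neg_one, zpow_neg_one]
          have hτi : (0:ℝ) < τ⁻¹ := by positivity
          have hsq : (0:ℝ) ≤ (2 * X ^ (1-c)) ^ 2 := sq_nonneg _
          calc (2 * X ^ (1-c)) ^ 2 * ((τ⁻¹ - δ⁻¹) / (-1:ℤ))
              = (2 * X ^ (1-c)) ^ 2 * (δ⁻¹ - τ⁻¹) := by push_cast; ring
            _ ≤ (2 * X ^ (1-c)) ^ 2 * δ⁻¹ := by nlinarith
            _ = 4 * X ^ (2-c) := by rw [hδinv]; exact hval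
        linarith
      have hB1 : (∫ x in (-τ)..(-δ), ‖I X c x‖ ^ 2) ≤ 4 * X ^ (2-c) := by
        have h0 : (0:ℝ) ∉ Set.uIcc (-τ) (-δ) := by
          rw [Set.uIcc_of_le (by linarith)]
          intro h
          exact absurd h.2 (by linarith)
        have := hside (-τ) (-δ) h0 (by linarith)
          (fun x hx => by have := hx.2; intro hc0; rw [hc0] at this; linarith) hi1
        have hcomp : (2 * X ^ (1-c)) ^ 2 * (((-δ) ^ (-1:ℤ) - (-τ) ^ (-1:ℤ)) / (-1:ℤ))
            ≤ 4 * X ^ (2-c) := by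
          rw [zpow_neg_one, zpow_neg_one]
          have hτi : (0:ℝ) < τ⁻¹ := by positivity
          have hsq : (0:ℝ) ≤ (2 * X ^ (1-c)) ^ 2 := sq_nonneg _
          have hneg1 : (-δ)⁻¹ = -δ⁻¹ := by rw [inv_neg]
          have hneg2 : (-τ)⁻¹ = -τ⁻¹ := by rw [inv_neg]
          calc (2 * X ^ (1-c)) ^ 2 * (((-δ)⁻¹ - (-τ)⁻¹) / (-1:ℤ))
              = (2 * X ^ (1-c)) ^ 2 * (δ⁻¹ - τ⁻¹) := by
                rw [hneg1, hneg2]; push_cast; ring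
            _ ≤ (2 * X ^ (1-c)) ^ 2 * δ⁻¹ := by nlinarith
            _ = 4 * X ^ (2-c) := by rw [hδinv]; exact hval
        linarith
      have hB2 : (∫ x in (-δ)..δ, ‖I X c x‖ ^ 2) ≤ X ^ (2-c) / 2 := by
        have hptw : ∀ x ∈ Set.Icc (-δ) δ, ‖I X c x‖ ^ 2 ≤ (X/2) ^ 2 := by
          intro x _
          have h := norm_I_triv X c x (by linarith)
          exact pow_le_pow_left₀ (norm_nonneg _) h 2
        have hmono := intervalIntegral.integral_mono_on (by linarith : -δ ≤ δ) hi2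
          intervalIntegrable_const hptw
        rw [intervalIntegral.integral_const, smul_eq_mul] at hmono
        have hδX : δ * X ^ 2 = X ^ (2-c) := by
          rw [hδ, show (X:ℝ) ^ 2 = X ^ ((2:ℕ):ℝ) from (Real.rpow_natCast X 2).symm,
            ← Real.rpow_add hX0, show -c + ((2:ℕ):ℝ) = 2-c from by push_cast; ring]
        calc (∫ x in (-δ)..δ, ‖I X c x‖ ^ 2) ≤ (δ - -δ) * (X/2) ^ 2 := hmono
          _ = (δ * X ^ 2) / 2 := by ring
          _ = X ^ (2-c) / 2 := by rw [hδX]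
      have htot : (∫ x in (-τ)..τ, ‖I X c x‖ ^ 2)
          = (∫ x in (-τ)..(-δ), ‖I X c x‖ ^ 2) + (∫ x in (-δ)..δ, ‖I X c x‖ ^ 2)
            + (∫ x in δ..τ, ‖I X c x‖ ^ 2) := by
        rw [e1, e2]
      rw [htot]
      have hprod : (0:ℝ) ≤ 100 * X ^ (2-c) * (Real.log X - 1) :=
        mul_nonneg (by positivity) (by linarith)
      linarith [hB1, hB2, hB3, hX2c.le]
    · rw [intervalIntegral.integral_undef hInt]
      positivity
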